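/- The reconciled covariance matrix S(SᵀW⁻¹S)⁻¹Sᵀ is dominated by W in the Loewner order: W − S(SᵀW⁻¹S)⁻¹Sᵀ is positive semidefinite. -/

import Mathlib

/-!
The block matrix `[[W, S], [Sᵀ, Sᵀ W⁻¹ S]]` has Schur complement `0` with respect to the positive
definite block `W`, so it is positive semidefinite. Full column rank of `S` makes `Sᵀ W⁻¹ S`
positive definite, and the Schur complement with respect to that block, `W - S (Sᵀ W⁻¹ S)⁻¹ Sᵀ`,
is therefore positive semidefinite as well.
-/

open Matrix

theorem Matrix.mulVec_injective_of_rank_eq_card {K m n : Type*} [Field K] [Fintype n]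
    {A : Matrix m n K} (h : A.rank = Fintype.card n) : Function.Injective A.mulVec := by
  rw [mulVec_injective_iff, linearIndependent_iff_card_eq_finrank_span, ← h,
    rank_eq_finrank_span_cols]
  rfl

theorem Matrix.PosDef.posSemidef_sub_mul_inv_conjTranspose_mul_inv_mul_mul_conjTranspose
    {K m n : Type*} [Field K] [PartialOrder K] [StarRing K] [StarOrderedRing K]
    [Fintype m] [Fintype n] [DecidableEq m] [DecidableEq n]
    {A : Matrix n n K} (hA : A.PosDef) {B : Matrix n m K} (hB : Function.Injective B.mulVec) :
    (A - B * (Bᴴ * A⁻¹ * B)⁻¹ * Bᴴ).PosSemidef := by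
  have hD : (Bᴴ * A⁻¹ * B).PosDef := hA.inv.conjTranspose_mul_mul_same hB
  have := hA.isUnit.invertible
  have := hD.isUnit.invertible
  have hblock : (fromBlocks A B Bᴴ (Bᴴ * A⁻¹ * B)).PosSemidef :=
    (PosDef.fromBlocks₁₁ B _ hA).2 (by simpa using PosSemidef.zero)
  exact (PosDef.fromBlocks₂₂ A B hD).1 hblock

theorem reconciled_covariance_le_general (n m : ℕ)
    (W : Matrix (Fin n) (Fin n) ℝ) (hW : W.PosDef)
    (S : Matrix (Fin n) (Fin m) ℝ) (hS : S.rank = m) :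
    (W - S * (Sᵀ * W⁻¹ * S)⁻¹ * Sᵀ).PosSemidef := by
  have hS_inj : Function.Injective S.mulVec :=
    mulVec_injective_of_rank_eq_card (by rw [hS, Fintype.card_fin])
  simpa only [conjTranspose_eq_transpose_of_trivial] using
    hW.posSemidef_sub_mul_inv_conjTranspose_mul_inv_mul_mul_conjTranspose hS_inj

/-- The reconciled covariance is dominated by `W` in the Loewner order:
`W − S (Sᵀ W⁻¹ S)⁻¹ Sᵀ` is positive semidefinite. -/
theorem reconciled_covariance_le (n m : ℕ) (hmn : m ≤ n)
    (W : Matrix (Fin n) (Fin n) ℝ) (hW : W.PosDef)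
    (S : Matrix (Fin n) (Fin m) ℝ) (hS : S.rank = m) :
    (W - S * (Sᵀ * W⁻¹ * S)⁻¹ * Sᵀ).PosSemidef :=
  reconciled_covariance_le_general n m W hW S hS
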